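/- arXiv:0904.1871 — 5 statements merged into one kernel-verified Lean document; each statement's English description precedes it below -/
import Mathlib

section
/- If A is a basis for the cyclic group Z/nZ (i.e. hA = Z/nZ for some h ≥ 1) with order ρ(A) (the least such h), then |A| · ρ(A) < 2n. -/
open Filter Set Pointwise

/-- `nfold A h` is the `h`-fold sumset of `A` (sums of exactly `h` elements). -/
def nfold (A : Set ℤ) : ℕ → Set ℤ
  | 0 => {0}
  | n + 1 => A + nfold A n

/-- The `h`-fold sumset of `A` contains all sufficiently large naturals. -/
def CoversAt (A : Set ℤ) (h : ℕ) : Prop :=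
  ∀ᶠ m : ℕ in Filter.atTop, (m : ℤ) ∈ nfold A h

/-- `A` is an asymptotic basis for ℕ. -/
def IsAsympBasis (A : Set ℤ) : Prop := ∃ h, CoversAt A h

/-- The order `G(A)` of an asymptotic basis. -/
noncomputable def basisOrder (A : Set ℤ) : ℕ := sInf {h | CoversAt A h}

/-- Lower asymptotic density of a set of integers. -/
noncomputable def lowerDensity (S : Set ℤ) : ℝ :=
  Filter.liminf (fun n : ℕ => ((S ∩ Set.Icc 1 (n : ℤ)).ncard : ℝ) / n) Filter.atTop

/-- Diameter of a set of integers. -/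
noncomputable def diam (S : Set ℤ) : ℤ := sSup S - sInf S

/-- `h`-fold sumset in `ZMod n`. -/
def nfoldZ {n : ℕ} (A : Set (ZMod n)) : ℕ → Set (ZMod n)
  | 0 => {0}
  | t + 1 => A + nfoldZ A t

section KLproof
open Finset Pointwise

namespace KLcore

variable {n : ℕ} [NeZero n]

/-- Iterated sumset on Finsets. -/
def nfoldF (C : Finset (ZMod n)) : ℕ → Finset (ZMod n)
  | 0 => {0}
  | k + 1 => C + nfoldF C k

/-- Possible boundary sizes of "fragment candidates". -/
def DSet (C : Finset (ZMod n)) : Set ℕ :=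
  {d | ∃ X : Finset (ZMod n), X.Nonempty ∧ X + C ≠ Finset.univ ∧ (X + C).card = X.card + d}

/-- The isoperimetric connectivity. -/
noncomputable def kap (C : Finset (ZMod n)) : ℕ := sInf (DSet C)

/-- Sizes of fragments. -/
def ASet (C : Finset (ZMod n)) : Set ℕ :=
  {s | ∃ X : Finset (ZMod n), X.Nonempty ∧ X + C ≠ Finset.univ ∧
    (X + C).card = X.card + kap C ∧ X.card = s}

/-- The size of an atom. -/
noncomputable def asize (C : Finset (ZMod n)) : ℕ := sInf (ASet C)

lemma card_univ_zmod : (Finset.univ : Finset (ZMod n)).card = n := by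
  rw [Finset.card_univ, ZMod.card]

lemma ne_univ_iff_card_lt {X : Finset (ZMod n)} : X ≠ Finset.univ ↔ X.card < n := by
  have h1 : X.card ≤ n := by
    have h2 := Finset.card_le_univ X
    rw [ZMod.card] at h2
    exact h2
  constructor
  · intro h
    rcases lt_or_eq_of_le h1 with h' | h'
    · exact h'
    · exact absurd (Finset.eq_univ_of_card X (by rw [h', ZMod.card])) h
  · intro h h'
    rw [h', card_univ_zmod] at h
    exact lt_irrefl _ h

lemma add_univ_of_nonempty {X : Finset (ZMod n)} (h : X.Nonempty) : X + Finset.univ = Finset.univ := by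
  apply Finset.eq_univ_of_forall
  intro u
  obtain ⟨x, hx⟩ := h
  exact Finset.mem_add.2 ⟨x, hx, u - x, Finset.mem_univ _, by ring⟩

lemma neg_add_finset (s t : Finset (ZMod n)) : -(s + t) = -s + -t := by
  ext x
  simp only [Finset.mem_neg, Finset.mem_add]
  constructor
  · rintro ⟨y, ⟨a, ha, b, hb, rfl⟩, rfl⟩
    exact ⟨-a, ⟨a, ha, rfl⟩, -b, ⟨b, hb, rfl⟩, by ring⟩
  · rintro ⟨a', ⟨a, ha, rfl⟩, b', ⟨b, hb, rfl⟩, rfl⟩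
    exact ⟨a + b, ⟨a, ha, b, hb, rfl⟩, by ring⟩

lemma add_singleton_zero (s : Finset (ZMod n)) : s + {(0 : ZMod n)} = s := by
  have h : ({(0:ZMod n)} : Finset (ZMod n)) = 0 := rfl
  rw [h, add_zero]

lemma singleton_zero_add (s : Finset (ZMod n)) : ({(0 : ZMod n)} : Finset (ZMod n)) + s = s := by
  have h : ({(0:ZMod n)} : Finset (ZMod n)) = 0 := rfl
  rw [h, zero_add]

/-- Boundary value for any member of the family. -/
lemma exists_d {C X : Finset (ZMod n)} (h0 : (0 : ZMod n) ∈ C) (hXne : X.Nonempty)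
    (hXC : X + C ≠ Finset.univ) :
    ∃ d, (X + C).card = X.card + d ∧ kap C ≤ d := by
  have hsub : X ⊆ X + C := Finset.subset_add_left X h0
  refine ⟨(X + C).card - X.card, by
    have := Finset.card_le_card hsub; omega, ?_⟩
  exact Nat.sInf_le ⟨X, hXne, hXC, by have := Finset.card_le_card hsub; omega⟩

lemma DSet_nonempty {C : Finset (ZMod n)} (h0 : (0 : ZMod n) ∈ C) (hne : C ≠ Finset.univ) :
    (DSet C).Nonempty := by
  have h1 : ({(0:ZMod n)} : Finset (ZMod n)) + C = C := singleton_zero_add C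
  have h2 : ({(0:ZMod n)} : Finset (ZMod n)) + C ≠ Finset.univ := by rw [h1]; exact hne
  obtain ⟨d, hd, _⟩ := exists_d (X := {(0:ZMod n)}) h0 (Finset.singleton_nonempty _) h2
  exact ⟨d, {(0:ZMod n)}, Finset.singleton_nonempty _, h2, hd⟩

/-- Existence of a fragment. -/
lemma frag_exists {C : Finset (ZMod n)} (h0 : (0 : ZMod n) ∈ C) (hne : C ≠ Finset.univ) :
    ∃ X : Finset (ZMod n), X.Nonempty ∧ X + C ≠ Finset.univ ∧ (X + C).card = X.card + kap C := by
  have := Nat.sInf_mem (DSet_nonempty h0 hne)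
  obtain ⟨X, h1, h2, h3⟩ := this
  exact ⟨X, h1, h2, h3⟩

lemma ASet_nonempty {C : Finset (ZMod n)} (h0 : (0 : ZMod n) ∈ C) (hne : C ≠ Finset.univ) :
    (ASet C).Nonempty := by
  obtain ⟨X, h1, h2, h3⟩ := frag_exists h0 hne
  exact ⟨X.card, X, h1, h2, h3, rfl⟩

/-- X + iterated sumset stays X if X + C = X. -/
lemma kap_pos {C : Finset (ZMod n)} (h0 : (0 : ZMod n) ∈ C) (hne : C ≠ Finset.univ)
    (hcov : ∃ k, nfoldF C k = Finset.univ) : 1 ≤ kap C := by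
  by_contra h
  push_neg at h
  interval_cases h' : kap C
  obtain ⟨X, hXne, hXC, hcard⟩ := frag_exists h0 hne
  rw [h'] at hcard
  have hXeq : X + C = X := by
    apply (Finset.eq_of_subset_of_card_le (Finset.subset_add_left X h0) (by omega)).symm
  have hiter : ∀ k, X + nfoldF C k = X := by
    intro k
    induction k with
    | zero => exact add_singleton_zero X
    | succ k ih =>
      show X + (C + nfoldF C k) = X
      rw [← add_assoc, hXeq, ih]
  obtain ⟨k, hk⟩ := hcov
  have h2 := hiter k
  rw [hk, add_univ_of_nonempty hXne] at h2
  apply hXC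
  rw [← h2] at hXeq
  rw [← h2, hXeq]

lemma card_singleton_add' (g : ZMod n) (X : Finset (ZMod n)) : ({g} + X).card = X.card :=
  Finset.card_singleton_add g X

lemma singleton_add_ne_univ {g : ZMod n} {X : Finset (ZMod n)} (h : X ≠ Finset.univ) :
    {g} + X ≠ Finset.univ := by
  rw [ne_univ_iff_card_lt] at h ⊢
  rwa [card_singleton_add']

/-- Produce an atom containing 0. -/
lemma atom_zero {C : Finset (ZMod n)} (h0 : (0 : ZMod n) ∈ C) (hne : C ≠ Finset.univ) :
    ∃ A : Finset (ZMod n), (0 : ZMod n) ∈ A ∧ A.Nonempty ∧ A + C ≠ Finset.univ ∧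
      (A + C).card = A.card + kap C ∧ A.card = asize C := by
  obtain ⟨X, hXne, hXC, hXcard, hXsize⟩ := Nat.sInf_mem (ASet_nonempty h0 hne)
  obtain ⟨x, hx⟩ := hXne
  have hadd : ({-x} : Finset (ZMod n)) + X + C = {-x} + (X + C) := add_assoc _ _ _
  refine ⟨{-x} + X, ?_, ?_, ?_, ?_, ?_⟩
  · exact Finset.mem_add.2 ⟨-x, Finset.mem_singleton_self _, x, hx, by ring⟩
  · exact ⟨-x + x, Finset.mem_add.2 ⟨-x, Finset.mem_singleton_self _, x, hx, rfl⟩⟩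
  · rw [hadd]; exact singleton_add_ne_univ hXC
  · rw [hadd, card_singleton_add', card_singleton_add', hXcard]
  · rw [card_singleton_add', hXsize]; rfl

/-- The central isoperimetric lemma: if fragments are not too large,
then `kap C` is at least half of `|C|`. -/
lemma lemma5 {C : Finset (ZMod n)} (h0 : (0 : ZMod n) ∈ C) (hne : C ≠ Finset.univ)
    (hcov : ∃ k, nfoldF C k = Finset.univ)
    (hgood : 2 * asize C + kap C ≤ n) : C.card ≤ 2 * kap C := by
  obtain ⟨A, hA0, hAne, hAC, hAcard, hAsize⟩ := atom_zero h0 hne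
  have hkap1 : 1 ≤ kap C := kap_pos h0 hne hcov
  -- the key claim: intersecting translates of the atom coincide
  have key : ∀ g : ZMod n, (A ∩ ({g} + A)).Nonempty → {g} + A = A := by
    intro g hmeet
    by_contra hne2
    set Y : Finset (ZMod n) := {g} + A with hY
    have hYne : Y.Nonempty := ⟨g + 0, Finset.mem_add.2 ⟨g, Finset.mem_singleton_self _, 0, hA0, rfl⟩⟩
    have hYadd : Y + C = {g} + (A + C) := add_assoc _ _ _
    have hYC : Y + C ≠ Finset.univ := by rw [hYadd]; exact singleton_add_ne_univ hAC
    have hYcard : (Y + C).card = Y.card + kap C := by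
      rw [hYadd, card_singleton_add', card_singleton_add', hAcard]
    have hYsize : Y.card = A.card := card_singleton_add' g A
    set Z : Finset (ZMod n) := A ∩ Y with hZ
    have hZssub : Z ⊂ A := by
      constructor
      · exact Finset.inter_subset_left
      · intro hsub
        apply hne2
        have hAY : A ⊆ Y := fun t ht => Finset.mem_of_mem_inter_right (hsub ht)
        exact (Finset.eq_of_subset_of_card_le hAY (by rw [hYsize])).symm
    have hZlt : Z.card < A.card := Finset.card_lt_card hZssub
    have hZC1 : Z + C ⊆ (A + C) ∩ (Y + C) := Finset.inter_add_subset
    have hZCne : Z + C ≠ Finset.univ := by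
      intro h
      apply hAC
      apply Finset.eq_univ_of_forall
      intro u
      have : u ∈ Z + C := by rw [h]; exact Finset.mem_univ u
      exact (Finset.mem_of_mem_inter_left (hZC1 this))
    obtain ⟨dZ, hdZ, hdZge⟩ := exists_d h0 hmeet hZCne
    have hunion : (A ∪ Y) + C = (A + C) ∪ (Y + C) := by
      rw [Finset.union_add]
    have hcardIU : ((A + C) ∩ (Y + C)).card + ((A + C) ∪ (Y + C)).card
        = (A + C).card + (Y + C).card := Finset.card_inter_add_card_union _ _
    have hZCle : Z.card + dZ ≤ ((A + C) ∩ (Y + C)).card := by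
      rw [← hdZ]; exact Finset.card_le_card hZC1
    have hcardZW : Z.card + (A ∪ Y).card = A.card + Y.card :=
      Finset.card_inter_add_card_union _ _
    by_cases hW : (A ∪ Y) + C = Finset.univ
    · -- impossible by size
      have h1 : ((A + C) ∪ (Y + C)).card = n := by
        rw [← hunion, hW, card_univ_zmod]
      have hZpos : 0 < Z.card := Finset.card_pos.2 hmeet
      rw [hAcard, hYcard, hYsize, hAsize] at hcardIU
      omega
    · -- Z would be a smaller fragment
      have hWne : (A ∪ Y).Nonempty := ⟨0, Finset.mem_union_left _ hA0⟩
      obtain ⟨dW, hdW, hdWge⟩ := exists_d h0 hWne hW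
      have hWcard : ((A + C) ∪ (Y + C)).card = (A ∪ Y).card + dW := by
        rw [← hunion, hdW]
      rw [hWcard, hAcard, hYcard] at hcardIU
      have hdZeq : dZ = kap C := by omega
      have : asize C ≤ Z.card := Nat.sInf_le ⟨Z, hmeet, hZCne, by rw [hdZ, hdZeq], rfl⟩
      omega
  -- hence the atom is closed under addition
  have hAA : A + A = A := by
    apply Finset.Subset.antisymm
    · intro x hx
      obtain ⟨a, ha, b, hb, rfl⟩ := Finset.mem_add.1 hx
      have := key a ⟨a, Finset.mem_inter.2 ⟨ha,
        Finset.mem_add.2 ⟨a, Finset.mem_singleton_self _, 0, hA0, by ring⟩⟩⟩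
      rw [← this]
      exact Finset.mem_add.2 ⟨a, Finset.mem_singleton_self _, b, hb, rfl⟩
    · exact Finset.subset_add_right A hA0
  -- and under negation
  have hnegA : ∀ x ∈ A, -x ∈ A := by
    intro x hx
    have himg : A.image (fun y => x + y) ⊆ A := by
      intro t ht
      obtain ⟨y, hy, rfl⟩ := Finset.mem_image.1 ht
      rw [← hAA]
      exact Finset.mem_add.2 ⟨x, hx, y, hy, rfl⟩
    have hcardim : (A.image (fun y => x + y)).card = A.card :=
      Finset.card_image_of_injective _ (add_right_injective x)
    have heq : A.image (fun y => x + y) = A :=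
      Finset.eq_of_subset_of_card_le himg (by omega)
    have : (0 : ZMod n) ∈ A.image (fun y => x + y) := by rw [heq]; exact hA0
    obtain ⟨y, hy, hxy⟩ := Finset.mem_image.1 this
    have : y = -x := by linear_combination hxy
    rwa [← this]
  -- A + C contains two disjoint cosets of A
  have hACA : A + C ≠ A := by
    intro h
    rw [h] at hAcard
    omega
  have hAsub : A ⊆ A + C := Finset.subset_add_left A h0
  have hEx : ∃ t, t ∈ A + C ∧ t ∉ A := by
    by_contra h
    push_neg at h
    exact hACA (Finset.Subset.antisymm h hAsub)
  obtain ⟨t, htAC, htA⟩ := hEx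
  obtain ⟨a₁, ha₁, c₁, hc₁, hac⟩ := Finset.mem_add.1 htAC
  have hKsub : {c₁} + A ⊆ A + C := by
    intro x hx
    obtain ⟨c, hc, a, ha, rfl⟩ := Finset.mem_add.1 hx
    rw [Finset.mem_singleton.1 hc]
    exact Finset.mem_add.2 ⟨a, ha, c₁, hc₁, by ring⟩
  have hdisj : Disjoint ({c₁} + A) A := by
    rw [Finset.disjoint_left]
    intro x hx hxA
    obtain ⟨c, hc, a, ha, rfl⟩ := Finset.mem_add.1 hx
    rw [Finset.mem_singleton.1 hc] at hxA
    have hc1A : c₁ ∈ A := by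
      have h1 : c₁ = (c₁ + a) + (-a) := by ring
      rw [h1, ← hAA]
      exact Finset.mem_add.2 ⟨c₁ + a, hxA, -a, hnegA a ha, rfl⟩
    apply htA
    rw [← hac, ← hAA]
    exact Finset.mem_add.2 ⟨a₁, ha₁, c₁, hc1A, rfl⟩
  have hcard2 : 2 * A.card ≤ (A + C).card := by
    have h1 : ({c₁} + A) ∪ A ⊆ A + C := Finset.union_subset hKsub hAsub
    have h2 := Finset.card_le_card h1
    rw [Finset.card_union_of_disjoint hdisj, card_singleton_add'] at h2
    omega
  have hCsub : C ⊆ A + C := Finset.subset_add_right C hA0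
  have hCcard : C.card ≤ (A + C).card := Finset.card_le_card hCsub
  omega

lemma neg_neg_finset (C : Finset (ZMod n)) : -(-C) = C := by simp

lemma card_neg_finset (C : Finset (ZMod n)) : (-C).card = C.card := by
  simp [Finset.card_neg]

lemma zero_mem_neg {C : Finset (ZMod n)} (h0 : (0 : ZMod n) ∈ C) : (0 : ZMod n) ∈ -C :=
  Finset.mem_neg.2 ⟨0, h0, neg_zero⟩

lemma neg_ne_univ {C : Finset (ZMod n)} (hne : C ≠ Finset.univ) : -C ≠ Finset.univ := by
  rw [ne_univ_iff_card_lt] at hne ⊢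
  rwa [card_neg_finset]

/-- Duality: the dual of a fragment. -/
lemma dual_frag {C X : Finset (ZMod n)} (h0 : (0 : ZMod n) ∈ C) (hXne : X.Nonempty)
    (hXC : X + C ≠ Finset.univ) (hXcard : (X + C).card = X.card + kap C) :
    ∃ d, ((X + C)ᶜ).Nonempty ∧ (X + C)ᶜ + -C ≠ Finset.univ ∧
      ((X + C)ᶜ + -C).card = ((X + C)ᶜ).card + d ∧ kap (-C) ≤ d ∧ d ≤ kap C ∧
      ((X + C)ᶜ).card + (X.card + kap C) = n := by
  set Y : Finset (ZMod n) := (X + C)ᶜ with hY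
  have hYne : Y.Nonempty := by
    rw [hY, ← Finset.card_pos, Finset.card_compl, ZMod.card]
    rw [ne_univ_iff_card_lt] at hXC
    omega
  have hsub : Y + -C ⊆ Xᶜ := by
    intro x hx
    obtain ⟨y, hy, c', hc', rfl⟩ := Finset.mem_add.1 hx
    obtain ⟨c, hc, rfl⟩ := Finset.mem_neg.1 hc'
    rw [Finset.mem_compl]
    intro hxX
    have h3 : y + -c + c ∈ X + C := Finset.mem_add.2 ⟨y + -c, hxX, c, hc, rfl⟩
    rw [hY, Finset.mem_compl] at hy
    apply hy
    have he : y + -c + c = y := by ring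
    rwa [he] at h3
  have hYCne : Y + -C ≠ Finset.univ := by
    intro h
    obtain ⟨x, hx⟩ := hXne
    have h4 : x ∈ Y + -C := by rw [h]; exact Finset.mem_univ x
    have h5 := hsub h4
    rw [Finset.mem_compl] at h5
    exact h5 hx
  obtain ⟨d, hd, hdge⟩ := exists_d (zero_mem_neg h0) hYne hYCne
  have hXCn : (X + C).card ≤ n := by
    have h6 := Finset.card_le_univ (X + C); rwa [ZMod.card] at h6
  have hYcard : Y.card + (X.card + kap C) = n := by
    rw [hY, Finset.card_compl, ZMod.card, hXcard]
    omega
  have hsubcard : (Y + -C).card ≤ n - X.card := by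
    have h1 := Finset.card_le_card hsub
    rw [Finset.card_compl, ZMod.card] at h1
    exact h1
  have hXn : X.card ≤ n := by
    have h7 := Finset.card_le_univ X; rwa [ZMod.card] at h7
  refine ⟨d, hYne, hYCne, hd, hdge, by omega, hYcard⟩

lemma kap_neg_le {C : Finset (ZMod n)} (h0 : (0 : ZMod n) ∈ C) (hne : C ≠ Finset.univ) :
    kap (-C) ≤ kap C := by
  obtain ⟨X, hXne, hXC, hXcard⟩ := frag_exists h0 hne
  obtain ⟨d, _, _, _, h1, h2, _⟩ := dual_frag h0 hXne hXC hXcard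
  omega

lemma kap_neg_eq {C : Finset (ZMod n)} (h0 : (0 : ZMod n) ∈ C) (hne : C ≠ Finset.univ) :
    kap (-C) = kap C := by
  have h1 := kap_neg_le h0 hne
  have h2 := kap_neg_le (zero_mem_neg h0) (neg_ne_univ hne)
  rw [neg_neg_finset] at h2
  omega

lemma asize_neg_add {C : Finset (ZMod n)} (h0 : (0 : ZMod n) ∈ C) (hne : C ≠ Finset.univ) :
    asize (-C) + (asize C + kap C) ≤ n := by
  obtain ⟨A, hA0, hAne, hAC, hAcard, hAsize⟩ := atom_zero h0 hne
  obtain ⟨d, hYne, hYCne, hYcard, hd1, hd2, hn⟩ := dual_frag h0 hAne hAC hAcard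
  have hdeq : d = kap (-C) := by
    have h8 := kap_neg_eq h0 hne
    omega
  have h9 : asize (-C) ≤ ((A + C)ᶜ).card :=
    Nat.sInf_le ⟨(A + C)ᶜ, hYne, hYCne, by rw [hYcard, hdeq], rfl⟩
  omega

/-- The key bound : `|C| ≤ 2 kap C`. -/
lemma card_le_two_kap {C : Finset (ZMod n)} (h0 : (0 : ZMod n) ∈ C) (hne : C ≠ Finset.univ)
    (hcov : ∃ k, nfoldF C k = Finset.univ) (hcovN : ∃ k, nfoldF (-C) k = Finset.univ) :
    C.card ≤ 2 * kap C := by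
  by_cases g1 : 2 * asize C + kap C ≤ n
  · exact lemma5 h0 hne hcov g1
  by_cases g2 : 2 * asize (-C) + kap (-C) ≤ n
  · have h1 := lemma5 (zero_mem_neg h0) (neg_ne_univ hne) hcovN g2
    rw [card_neg_finset, kap_neg_eq h0 hne] at h1
    exact h1
  · exfalso
    push_neg at g1 g2
    have h1 := asize_neg_add h0 hne
    have h2 := kap_neg_eq h0 hne
    omega

lemma zero_mem_nfold {C : Finset (ZMod n)} (h0 : (0 : ZMod n) ∈ C) (k : ℕ) :
    (0 : ZMod n) ∈ nfoldF C k := by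
  induction k with
  | zero => exact Finset.mem_singleton_self 0
  | succ k ih => exact Finset.mem_add.2 ⟨0, h0, 0, ih, by ring⟩

lemma nfold_neg (C : Finset (ZMod n)) (k : ℕ) : nfoldF (-C) k = -(nfoldF C k) := by
  induction k with
  | zero => show ({0} : Finset (ZMod n)) = -{0}; simp
  | succ k ih => show -C + nfoldF (-C) k = -(C + nfoldF C k); rw [ih, neg_add_finset]

lemma nfold_one (C : Finset (ZMod n)) : nfoldF C 1 = C := by
  show C + {0} = C
  exact add_singleton_zero C

/-- Main Finset-level theorem. -/
theorem main_finset {C : Finset (ZMod n)} (h0 : (0 : ZMod n) ∈ C) {ρ : ℕ} (hρ2 : 2 ≤ ρ)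
    (hcov : nfoldF C ρ = Finset.univ)
    (hmin : ∀ k, 1 ≤ k → k < ρ → nfoldF C k ≠ Finset.univ) :
    C.card * ρ < 2 * n := by
  have hne : C ≠ Finset.univ := by
    have h1 := hmin 1 le_rfl (by omega)
    rwa [nfold_one] at h1
  have hcovE : ∃ k, nfoldF C k = Finset.univ := ⟨ρ, hcov⟩
  have hcovN : ∃ k, nfoldF (-C) k = Finset.univ := by
    refine ⟨ρ, ?_⟩
    rw [nfold_neg, hcov]
    simp
  have hkey : C.card ≤ 2 * kap C := card_le_two_kap h0 hne hcovE hcovN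
  have hkap1 : 1 ≤ kap C := kap_pos h0 hne hcovE
  -- growth
  have grow : ∀ j, j + 2 ≤ ρ → C.card + j * kap C ≤ (nfoldF C (j + 1)).card := by
    intro j
    induction j with
    | zero => intro _; rw [nfold_one]; omega
    | succ j ih =>
      intro hj
      have h1 := ih (by omega)
      have hXne : (nfoldF C (j + 1)).Nonempty := ⟨0, zero_mem_nfold h0 _⟩
      have hXC : nfoldF C (j + 1) + C ≠ Finset.univ := by
        have h2 : nfoldF C (j + 2) ≠ Finset.univ := hmin (j + 2) (by omega) (by omega)
        rw [add_comm]
        exact h2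
      obtain ⟨d, hd, hdge⟩ := exists_d h0 hXne hXC
      have h3 : (nfoldF C (j + 1 + 1)).card = (nfoldF C (j + 1)).card + d := by
        show (C + nfoldF C (j + 1)).card = _
        rw [add_comm C, hd]
      have h4 : (j+1) * kap C = j * kap C + kap C := by ring
      omega
  obtain ⟨r, rfl⟩ : ∃ r, ρ = r + 2 := ⟨ρ - 2, by omega⟩
  have h5 := grow r le_rfl
  have h6 : (nfoldF C (r + 1)).card < n := by
    rw [← ne_univ_iff_card_lt]
    exact hmin (r + 1) (by omega) (by omega)
  have h7 : C.card + r * kap C < n := by omega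
  have h8 : C.card * r ≤ 2 * (kap C * r) := by
    calc C.card * r ≤ (2 * kap C) * r := Nat.mul_le_mul_right r hkey
      _ = 2 * (kap C * r) := by ring
  have h9 : r * kap C = kap C * r := Nat.mul_comm _ _
  calc C.card * (r + 2) = C.card * r + 2 * C.card := by ring
    _ ≤ 2 * (kap C * r) + 2 * C.card := by omega
    _ = 2 * (C.card + kap C * r) := by ring
    _ < 2 * n := by omega

lemma nfold_shift (g : ZMod n) (D : Finset (ZMod n)) (k : ℕ) :
    nfoldF ({g} + D) k = {k • g} + nfoldF D k := by
  induction k with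
  | zero =>
    show ({0} : Finset (ZMod n)) = {(0 : ℕ) • g} + {0}
    rw [Finset.singleton_add_singleton]
    simp
  | succ k ih =>
    show ({g} + D) + nfoldF ({g} + D) k = {(k + 1) • g} + (D + nfoldF D k)
    rw [ih, add_add_add_comm, Finset.singleton_add_singleton]
    congr 1
    rw [succ_nsmul, add_comm]

lemma singleton_add_eq_univ_iff {g : ZMod n} {S : Finset (ZMod n)} :
    {g} + S = Finset.univ ↔ S = Finset.univ := by
  constructor
  · intro h
    by_contra hne
    exact singleton_add_ne_univ hne h
  · rintro rfl
    exact add_univ_of_nonempty (Finset.singleton_nonempty g)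

end KLcore

open KLcore in
lemma coe_nfoldF {n : ℕ} [NeZero n] (A : Set (ZMod n)) (k : ℕ) :
    ((nfoldF A.toFinite.toFinset k : Finset (ZMod n)) : Set (ZMod n)) = nfoldZ A k := by
  induction k with
  | zero =>
    show (({0} : Finset (ZMod n)) : Set (ZMod n)) = {0}
    simp
  | succ k ih =>
    show ((A.toFinite.toFinset + nfoldF A.toFinite.toFinset k : Finset (ZMod n)) : Set (ZMod n))
      = A + nfoldZ A k
    rw [Finset.coe_add, ih, Set.Finite.coe_toFinset]

theorem stmt1 (n : ℕ) (hn : 0 < n) (A : Set (ZMod n))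
    (hbasis : ∃ h, 1 ≤ h ∧ nfoldZ A h = Set.univ)
    (ρ : ℕ) (hρ : IsLeast {h | 1 ≤ h ∧ nfoldZ A h = Set.univ} ρ) :
    A.ncard * ρ < 2 * n := by
  classical
  haveI : NeZero n := ⟨hn.ne'⟩
  obtain ⟨⟨hρ1, hρuniv⟩, hρmin⟩ := hρ
  rcases eq_or_lt_of_le hρ1 with h1 | hρ2
  · -- ρ = 1 : then A = univ
    have hA : A = Set.univ := by
      have h2 : nfoldZ A 1 = Set.univ := by rw [h1]; exact hρuniv
      apply Set.eq_univ_of_forall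
      intro x
      have h3 : x ∈ nfoldZ A 1 := by rw [h2]; exact Set.mem_univ x
      obtain ⟨b, hb, c, hc, hbc⟩ := Set.mem_add.1 h3
      have hc0 : c = 0 := by
        have : c ∈ ({0} : Set (ZMod n)) := hc
        rwa [Set.mem_singleton_iff] at this
      rw [← hbc, hc0, add_zero]
      exact hb
    rw [hA, Set.ncard_univ, ← h1, mul_one]
    have h4 : Nat.card (ZMod n) = n := by rw [Nat.card_eq_fintype_card, ZMod.card]
    omega
  · -- 2 ≤ ρ
    have hAne : A.Nonempty := by
      by_contra hA
      rw [Set.not_nonempty_iff_eq_empty] at hA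
      subst hA
      obtain ⟨r, rfl⟩ : ∃ r, ρ = r + 1 := ⟨ρ - 1, by omega⟩
      have h5 : nfoldZ (∅ : Set (ZMod n)) (r + 1) = ∅ := by
        show ∅ + nfoldZ (∅ : Set (ZMod n)) r = ∅
        simp
      rw [h5] at hρuniv
      exact Set.empty_ne_univ hρuniv
    obtain ⟨a, ha⟩ := hAne
    set AF := A.toFinite.toFinset with hAF
    set C : Finset (ZMod n) := {-a} + AF with hC
    have haAF : a ∈ AF := (Set.Finite.mem_toFinset _).2 ha
    have h0C : (0 : ZMod n) ∈ C :=
      Finset.mem_add.2 ⟨-a, Finset.mem_singleton_self _, a, haAF, by ring⟩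
    have hiff : ∀ k, (KLcore.nfoldF C k = Finset.univ ↔ nfoldZ A k = Set.univ) := by
      intro k
      rw [hC, KLcore.nfold_shift, KLcore.singleton_add_eq_univ_iff]
      have hcoe := coe_nfoldF A k
      rw [← hcoe]
      exact Finset.coe_eq_univ.symm
    have hcovρ : KLcore.nfoldF C ρ = Finset.univ := (hiff ρ).2 hρuniv
    have hminC : ∀ k, 1 ≤ k → k < ρ → KLcore.nfoldF C k ≠ Finset.univ := by
      intro k h1k hkρ h
      have h6 : ρ ≤ k := hρmin ⟨h1k, (hiff k).1 h⟩
      omega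
    have hmain := KLcore.main_finset h0C hρ2 hcovρ hminC
    have hcard : C.card = A.ncard := by
      rw [hC, KLcore.card_singleton_add']
      exact (Set.ncard_eq_toFinset_card A A.toFinite).symm
    rw [← hcard]
    exact hmain





end KLproof
end

section
/- Let A be an asymptotic basis for N of order at most h, and X a finite subset of A with G(A∖X) < ∞. Let μ = μ(A,X) = min over y ∈ A∖X of diam(X ∪ {y}). Then G(A∖X) ≤ 4h(2hμ + 1). -/
open Filter Set Pointwise

/-!
Replacing each summand from `X` by `y` (where `μ = diam (X ∪ {y})`) moves an `h`-fold sum by at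
most `hμ`, so `S = h • (A \ X)` meets every interval `(z, z + K]`, `K = 2hμ + 1`, beyond some
point. There the gcd of the short differences `e ≤ K` of `S` divides every difference; for `h ≥ 2`
each element of `A \ X` is moved there by adding one common element of `(h - 1) • (A \ X)`, so
this gcd divides all differences of the basis `A \ X` and is `1`. Fix one short difference `γ`:
descending the chain of gcds, every residue mod `γ` is `∑ cₑ e` with `∑ cₑ ≤ γ - 1`, and at most
`2K` further copies of `γ` hit every integer of a window of length `K` exactly. A difference `e`
is realised by `pₑ, pₑ + e ∈ S`, so `C pₑ + c e ∈ C • S` for `c ≤ C`; with one element of `S` to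
reach the window, every large integer lies in `t • S` for some `t ≤ 3K`, whence
`G(A \ X) ≤ 3Kh`.
-/

lemma nfold_eq_nsmul (A : Set ℤ) : ∀ n, nfold A n = n • A
  | 0 => by rw [zero_nsmul]; rfl
  | n + 1 => by rw [succ_nsmul', ← nfold_eq_nsmul A n]; rfl

lemma coversAt_iff {A : Set ℤ} {t : ℕ} :
    CoversAt A t ↔ ∃ N : ℤ, ∀ z, N ≤ z → z ∈ t • A := by
  rw [CoversAt, eventually_atTop, nfold_eq_nsmul]
  constructor
  · rintro ⟨N, hN⟩
    refine ⟨N, fun z hz => ?_⟩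
    lift z to ℕ using (Nat.cast_nonneg N).trans hz
    exact hN z (by exact_mod_cast hz)
  · rintro ⟨N, hN⟩
    exact ⟨N.toNat, fun m hm => hN m (by omega)⟩

lemma not_coversAt_zero (A : Set ℤ) : ¬ CoversAt A 0 := by
  intro hA
  obtain ⟨N, hN⟩ := coversAt_iff.1 hA
  simp only [zero_nsmul, Set.mem_zero] at hN
  linarith [hN N le_rfl, hN (N + 1) (by omega)]

lemma CoversAt.nonempty {A : Set ℤ} {t : ℕ} (hA : CoversAt A t) : A.Nonempty := by
  obtain ⟨N, hN⟩ := coversAt_iff.1 hA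
  have hne : (t • A).Nonempty := ⟨N, hN N le_rfl⟩
  rcases t with _ | t
  · exact absurd hA (not_coversAt_zero A)
  · by_contra hempty
    simp_all [Set.not_nonempty_iff_eq_empty]

lemma CoversAt.mono {A : Set ℤ} {t t' : ℕ} (hA : CoversAt A t) (htt' : t ≤ t') :
    CoversAt A t' := by
  obtain ⟨a, ha⟩ := hA.nonempty
  obtain ⟨N, hN⟩ := coversAt_iff.1 hA
  obtain ⟨k, rfl⟩ := Nat.exists_eq_add_of_le htt'
  refine coversAt_iff.2 ⟨N + k * |a|, fun z hz => ?_⟩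
  have hsplit : z = (z - k * a) + k • a := by simp
  rw [hsplit, add_nsmul]
  refine Set.add_mem_add (hN _ ?_) (Set.nsmul_mem_nsmul ha)
  linarith [mul_le_mul_of_nonneg_left (le_abs_self a) (Nat.cast_nonneg (α := ℤ) k)]

lemma IsAsympBasis.coversAt_basisOrder {A : Set ℤ} (hA : IsAsympBasis A) :
    CoversAt A (basisOrder A) :=
  Nat.sInf_mem hA

lemma basisOrder_le {A : Set ℤ} {t : ℕ} (hA : CoversAt A t) : basisOrder A ≤ t :=
  Nat.sInf_le hA

lemma BddAbove.nsmul {B : Set ℤ} (hB : BddAbove B) : ∀ n : ℕ, BddAbove (n • B)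
  | 0 => by rw [zero_nsmul]; exact bddAbove_singleton
  | n + 1 => by rw [succ_nsmul']; exact hB.add (hB.nsmul n)

lemma IsAsympBasis.not_bddAbove {B : Set ℤ} (hB : IsAsympBasis B) : ¬ BddAbove B := by
  intro hbdd
  obtain ⟨g, hg⟩ := hB
  obtain ⟨N, hN⟩ := coversAt_iff.1 hg
  obtain ⟨M, hM⟩ := hbdd.nsmul g
  linarith [hM (hN (max N (M + 1)) (le_max_left _ _)), le_max_right N (M + 1)]

lemma dvd_sub_of_mem_nsmul {B : Set ℤ} {d : ℤ} (hB : ∀ b ∈ B, ∀ b' ∈ B, d ∣ b' - b) :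
    ∀ n : ℕ, ∀ x ∈ n • B, ∀ y ∈ n • B, d ∣ y - x
  | 0, x, hx, y, hy => by
    rw [zero_nsmul, Set.mem_zero] at hx hy
    simp [hx, hy]
  | n + 1, x, hx, y, hy => by
    rw [succ_nsmul'] at hx hy
    obtain ⟨a, ha, u, hu, rfl⟩ := hx
    obtain ⟨b, hb, v, hv, rfl⟩ := hy
    rw [add_sub_add_comm]
    exact dvd_add (hB a ha b hb) (dvd_sub_of_mem_nsmul hB n u hu v hv)

lemma IsAsympBasis.eq_one_of_dvd_sub {B : Set ℤ} (hB : IsAsympBasis B) {d : ℕ}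
    (hd : ∀ b ∈ B, ∀ b' ∈ B, (d : ℤ) ∣ b' - b) : d = 1 := by
  obtain ⟨g, hg⟩ := hB
  obtain ⟨N, hN⟩ := coversAt_iff.1 hg
  have h1 := dvd_sub_of_mem_nsmul hd g N (hN N le_rfl) (N + 1) (hN _ (by omega))
  rw [add_sub_cancel_left] at h1
  exact_mod_cast Int.eq_one_of_dvd_one (Int.natCast_nonneg d) h1

lemma IsAsympBasis.eq_one_of_dvd_sub_nsmul {B : Set ℤ} (hB : IsAsympBasis B) {h : ℕ}
    (hh : 2 ≤ h) {N₀ : ℤ} {d : ℕ}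
    (hd : ∀ s ∈ h • B, ∀ s' ∈ h • B, N₀ ≤ s → N₀ ≤ s' → (d : ℤ) ∣ s' - s) : d = 1 := by
  refine hB.eq_one_of_dvd_sub fun b hb b' hb' => ?_
  obtain ⟨c, hc, hcbig⟩ := not_bddAbove_iff.1 hB.not_bddAbove (|N₀| + |b| + |b'|)
  have hshift : ∀ u ∈ B, u + (h - 1) • c ∈ h • B := fun u hu => by
    rw [← Nat.sub_add_cancel (by omega : 1 ≤ h), succ_nsmul']
    exact Set.add_mem_add hu (Set.nsmul_mem_nsmul hc)
  have hc' : c ≤ (h - 1) • c := by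
    rw [nsmul_eq_mul]
    nlinarith [abs_nonneg N₀, abs_nonneg b, abs_nonneg b', (by omega : (1 : ℤ) ≤ ((h - 1 : ℕ) : ℤ))]
  have := hd _ (hshift b hb) _ (hshift b' hb')
    (by linarith [le_abs_self N₀, neg_abs_le b, abs_nonneg b'])
    (by linarith [le_abs_self N₀, neg_abs_le b', abs_nonneg b])
  rwa [add_sub_add_right_eq_sub] at this

lemma exists_lt_dvd_sub_mul {γ e : ℕ} (hγ : 0 < γ) {z : ℤ} (hz : (Nat.gcd γ e : ℤ) ∣ z) :
    ∃ c < γ / Nat.gcd γ e, (γ : ℤ) ∣ z - c * e := by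
  set g := Nat.gcd γ e
  obtain ⟨m, hm⟩ : g ∣ γ := Nat.gcd_dvd_left γ e
  obtain ⟨e', he'⟩ : g ∣ e := Nat.gcd_dvd_right γ e
  have hg : 0 < g := Nat.gcd_pos_of_pos_left e hγ
  have hm0 : (0 : ℤ) < m := by
    have : 0 < m := Nat.pos_of_mul_pos_left (hm ▸ hγ)
    exact_mod_cast this
  have hdiv : γ / g = m := by rw [hm, Nat.mul_div_cancel_left m hg]
  rw [hdiv]
  obtain ⟨w, rfl⟩ := hz
  -- Bézout: `z ≡ k e (mod γ)`, and `m e ≡ 0 (mod γ)` lets us reduce `k` modulo `m`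
  set k := Int.gcdB γ e * w
  have hbez : (g : ℤ) = γ * Int.gcdA γ e + e * Int.gcdB γ e := by
    rw [← Int.gcd_eq_gcd_ab, Int.gcd_natCast_natCast]
  refine ⟨(k % m).toNat, by have := Int.emod_lt_of_pos k hm0; omega, ?_⟩
  rw [Int.toNat_of_nonneg (Int.emod_nonneg k hm0.ne')]
  refine ⟨Int.gcdA γ e * w + k / m * e', ?_⟩
  have hk := Int.emod_add_mul_ediv k m
  have hγ' : (γ : ℤ) = g * m := by exact_mod_cast hm
  have he'' : (e : ℤ) = g * e' := by exact_mod_cast he'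
  linear_combination w * hbez - (e : ℤ) * hk + (m * (k / m) : ℤ) * he'' - (k / m * e' : ℤ) * hγ'

lemma exists_le_dvd_sub_sum (E : Finset ℕ) {γ : ℕ} (hγ : 0 < γ) :
    ∃ C : ℕ → ℕ, (∑ e ∈ E, C e + 1) * Nat.gcd γ (E.gcd id) ≤ γ ∧
      ∀ x : ℤ, (Nat.gcd γ (E.gcd id) : ℤ) ∣ x →
        ∃ c ≤ C, (γ : ℤ) ∣ x - ∑ e ∈ E, (c e : ℤ) * e := by
  classical
  induction E using Finset.induction_on generalizing γ with
  | empty =>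
    refine ⟨0, by simp, fun x hx => ⟨0, le_rfl, by simpa using hx⟩⟩
  | insert a E ha ih =>
    set g := Nat.gcd γ a
    have hg : 0 < g := Nat.gcd_pos_of_pos_left a hγ
    have hgcd : Nat.gcd g (E.gcd id) = Nat.gcd γ ((insert a E).gcd id) := by
      rw [Finset.gcd_insert, Nat.gcd_assoc]; rfl
    obtain ⟨C, hC, hrep⟩ := ih hg
    rw [hgcd] at hC hrep
    obtain ⟨m, hm⟩ : g ∣ γ := Nat.gcd_dvd_left γ a
    have hdiv : γ / g = m := by rw [hm, Nat.mul_div_cancel_left m hg]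
    have hm1 : 1 ≤ m := Nat.pos_of_mul_pos_left (hm ▸ hγ)
    refine ⟨Function.update C a (m - 1), ?_, fun x hx => ?_⟩
    · rw [Finset.sum_insert ha, Function.update_self, Finset.sum_update_of_notMem ha]
      set d := Nat.gcd γ ((insert a E).gcd id)
      have key : m - 1 + ∑ e ∈ E, C e + 1 ≤ m * (∑ e ∈ E, C e + 1) := by
        obtain ⟨k, rfl⟩ := Nat.exists_eq_add_of_le hm1
        rw [Nat.add_sub_cancel_left]
        nlinarith [Nat.zero_le (k * ∑ e ∈ E, C e)]
      calc (m - 1 + ∑ e ∈ E, C e + 1) * d ≤ m * ((∑ e ∈ E, C e + 1) * d) := by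
            rw [← mul_assoc]; exact Nat.mul_le_mul_right d key
        _ ≤ γ := by rw [hm, mul_comm g]; exact Nat.mul_le_mul_left m hC
    · obtain ⟨c, hcC, hc⟩ := hrep x hx
      obtain ⟨ca, hca, hdvd⟩ := exists_lt_dvd_sub_mul hγ hc
      rw [hdiv] at hca
      refine ⟨Function.update c a ca, fun e => ?_, ?_⟩
      · rcases eq_or_ne e a with rfl | hne
        · simp only [Function.update_self]; omega
        · simp only [Function.update_of_ne hne]; exact hcC e
      · rw [Finset.sum_insert ha, Function.update_self]
        rw [Finset.sum_congr rfl fun e he => by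
          rw [Function.update_of_ne (ne_of_mem_of_not_mem he ha)]]
        convert hdvd using 1
        ring

lemma exists_le_eq_sum_of_mem_Ico {E : Finset ℕ} {γ K : ℕ} (hγE : γ ∈ E) (hγ : 0 < γ)
    (hEK : ∀ e ∈ E, e ≤ K) (hE : E.gcd id = 1) :
    ∃ C : ℕ → ℕ, ∑ e ∈ E, C e < 3 * K ∧
      ∀ x : ℤ, γ * K ≤ x → x < γ * K + K → ∃ c ≤ C, x = ∑ e ∈ E, (c e : ℤ) * e := by
  classical
  obtain ⟨C, hC, hrep⟩ := exists_le_dvd_sub_sum E hγ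
  rw [hE, Nat.gcd_one_right] at hC hrep
  rw [mul_one] at hC
  have hγK := hEK γ hγE
  refine ⟨C + Pi.single γ (2 * K), ?_, fun x hx₁ hx₂ => ?_⟩
  · simp only [Pi.add_apply]
    rw [Finset.sum_add_distrib, Finset.sum_pi_single', if_pos hγE]
    omega
  obtain ⟨c, hcC, q, hq⟩ := hrep x (by simp)
  have hsum_le : ∑ e ∈ E, (c e : ℤ) * e ≤ (γ - 1) * K := by
    have hC' : ((∑ e ∈ E, C e : ℕ) : ℤ) ≤ γ - 1 := by
      have : ((∑ e ∈ E, C e + 1 : ℕ) : ℤ) ≤ γ := by exact_mod_cast hC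
      push_cast at this ⊢; linarith
    calc ∑ e ∈ E, (c e : ℤ) * e ≤ ∑ e ∈ E, (C e : ℤ) * K :=
          Finset.sum_le_sum fun e he => mul_le_mul (by exact_mod_cast hcC e)
            (by exact_mod_cast hEK e he) (by positivity) (by positivity)
      _ = ((∑ e ∈ E, C e : ℕ) : ℤ) * K := by push_cast; rw [Finset.sum_mul]
      _ ≤ (γ - 1) * K := mul_le_mul_of_nonneg_right hC' (by positivity)
  have hsum_nonneg : 0 ≤ ∑ e ∈ E, (c e : ℤ) * e := by positivity
  have hγ' : (0 : ℤ) < γ := by exact_mod_cast hγ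
  have hq0 : 0 ≤ q := by nlinarith
  have hq2K : q ≤ 2 * K := by nlinarith
  refine ⟨c + Pi.single γ q.toNat, fun e => ?_, ?_⟩
  · rcases eq_or_ne e γ with rfl | hne
    · have hce : c e ≤ C e := hcC e
      simp only [Pi.add_apply, Pi.single_eq_same]
      omega
    · simp only [Pi.add_apply, Pi.single_eq_of_ne hne, add_zero]; exact hcC e
  · have hsingle : ∑ e ∈ E, (((Pi.single γ q.toNat : ℕ → ℕ) e : ℕ) : ℤ) * e = q * γ := by
      rw [Finset.sum_eq_single_of_mem γ hγE fun e _ hne => by simp [Pi.single_eq_of_ne hne]]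
      simp [hq0]
    simp only [Pi.add_apply, Nat.cast_add, add_mul, Finset.sum_add_distrib, hsingle]
    linarith

lemma dvd_sub_of_bounded_gaps {S : Set ℤ} {K : ℕ} {N₀ d : ℤ}
    (hgap : ∀ z, N₀ ≤ z → ∃ s ∈ S, z < s ∧ s ≤ z + K)
    (hloc : ∀ s ∈ S, ∀ s' ∈ S, N₀ ≤ s → s < s' → s' ≤ s + K → d ∣ s' - s)
    {s s' : ℤ} (hs : s ∈ S) (hs' : s' ∈ S) (hN : N₀ ≤ s) (hN' : N₀ ≤ s') : d ∣ s' - s := by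
  suffices key : ∀ n : ℕ, ∀ s ∈ S, ∀ s' ∈ S, N₀ ≤ s → s ≤ s' → s' - s ≤ n → d ∣ s' - s by
    rcases le_total s s' with hle | hle
    · exact key _ s hs s' hs' hN hle (Int.self_le_toNat _)
    · rw [← dvd_neg, neg_sub]
      exact key _ s' hs' s hs hN' hle (Int.self_le_toNat _)
  intro n
  induction n with
  | zero =>
    intro s _ s' _ _ hle hn
    rw [show s' = s by push_cast at hn; omega, sub_self]
    exact dvd_zero d
  | succ n ih =>
    intro s hs s' hs' hN hle hn
    by_cases hclose : s' ≤ s + K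
    · rcases hle.eq_or_lt with rfl | hlt
      · rw [sub_self]; exact dvd_zero d
      · exact hloc s hs s' hs' hN hlt hclose
    · obtain ⟨t, ht, hst, hts⟩ := hgap s hN
      have htt' := ih t ht s' hs' (by omega) (by omega) (by push_cast at hn; omega)
      rw [← sub_add_sub_cancel s' t s]
      exact dvd_add htt' (hloc s hs t ht hN hst hts)

lemma add_mul_mem_nsmul {S : Set ℤ} {p e : ℤ} (hp : p ∈ S) (hpe : p + e ∈ S) {c C : ℕ}
    (hcC : c ≤ C) : C * p + c * e ∈ C • S := by
  obtain ⟨k, rfl⟩ := Nat.exists_eq_add_of_le hcC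
  have hsplit : ((c + k : ℕ) : ℤ) * p + c * e = c • (p + e) + k • p := by
    simp only [nsmul_eq_mul]; push_cast; ring
  rw [hsplit, add_nsmul]
  exact Set.add_mem_add (Set.nsmul_mem_nsmul hpe) (Set.nsmul_mem_nsmul hp)

theorem exists_nsmul_covers_of_bounded_gaps {S : Set ℤ} {K : ℕ} {N₀ : ℤ}
    (hgap : ∀ z, N₀ ≤ z → ∃ s ∈ S, z < s ∧ s ≤ z + K)
    (hcop : ∀ d : ℕ, (∀ s ∈ S, ∀ s' ∈ S, N₀ ≤ s → N₀ ≤ s' → (d : ℤ) ∣ s' - s) → d = 1) :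
    ∃ t ≤ 3 * K, ∃ N : ℤ, ∀ n, N ≤ n → n ∈ t • S := by
  classical
  set E := (Finset.Icc 1 K).filter fun e : ℕ => ∃ s ∈ S, s + e ∈ S
  have mem_E : ∀ {s s'}, s ∈ S → s' ∈ S → s < s' → s' ≤ s + K →
      (s' - s).toNat ∈ E := fun {s s'} hs hs' hlt hle => by
    refine Finset.mem_filter.2 ⟨Finset.mem_Icc.2 ⟨by omega, by omega⟩, s, hs, ?_⟩
    rwa [Int.toNat_of_nonneg (by omega), add_sub_cancel]
  obtain ⟨s₁, hs₁, hN₁, -⟩ := hgap N₀ le_rfl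
  obtain ⟨s₂, hs₂, h₁₂, h₂₁⟩ := hgap s₁ hN₁.le
  set γ := (s₂ - s₁).toNat
  have hγE : γ ∈ E := mem_E hs₁ hs₂ h₁₂ h₂₁
  have hE_Icc : ∀ e ∈ E, 1 ≤ e ∧ e ≤ K := fun e he =>
    Finset.mem_Icc.1 (Finset.mem_filter.1 he).1
  have hgcd : E.gcd id = 1 := hcop _ fun s hs s' hs' hN hN' =>
    dvd_sub_of_bounded_gaps hgap (fun s hs s' hs' _ hlt hle => by
      have := Int.natCast_dvd_natCast.2 (Finset.gcd_dvd (f := id) (mem_E hs hs' hlt hle))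
      rwa [id, Int.toNat_of_nonneg (by omega)] at this) hs hs' hN hN'
  obtain ⟨C, hC, hrep⟩ := exists_le_eq_sum_of_mem_Ico hγE (hE_Icc γ hγE).1
    (fun e he => (hE_Icc e he).2) hgcd
  choose! p hpS hpeS using fun e (he : e ∈ E) => (Finset.mem_filter.1 he).2
  set base := ∑ e ∈ E, (C e : ℤ) * p e
  refine ⟨1 + ∑ e ∈ E, C e, by omega, N₀ + base + γ * K + K, fun n hn => ?_⟩
  obtain ⟨s, hs, hlt, hle⟩ := hgap (n - base - γ * K - K) (by linarith)
  obtain ⟨c, hcC, hx⟩ := hrep (n - base - s) (by linarith) (by linarith)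
  have hn_eq : n = s + ∑ e ∈ E, ((C e : ℤ) * p e + c e * e) := by
    rw [Finset.sum_add_distrib, ← hx]; ring
  rw [hn_eq, add_nsmul, one_nsmul, ← Finset.sum_nsmul_assoc]
  exact Set.add_mem_add hs (Set.finsetSum_mem_finsetSum _ _ _ fun e he =>
    add_mul_mem_nsmul (hpS e he) (hpeS e he) (hcC e))

lemma sub_le_diam {S : Set ℤ} (hS : S.Finite) {x x' : ℤ} (hx : x ∈ S) (hx' : x' ∈ S) :
    x - x' ≤ diam S := by
  unfold diam
  linarith [le_csSup hS.bddAbove hx, csInf_le hS.bddBelow hx']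

lemma exists_mem_nsmul_abs_sub_le {A B : Set ℤ} {μ : ℤ}
    (hAB : ∀ a ∈ A, ∃ b ∈ B, |a - b| ≤ μ) :
    ∀ n : ℕ, ∀ m ∈ n • A, ∃ s ∈ n • B, |m - s| ≤ n * μ
  | 0, m, hm => by
    rw [zero_nsmul, Set.mem_zero] at hm
    exact ⟨0, by simp, by simp [hm]⟩
  | n + 1, m, hm => by
    rw [succ_nsmul'] at hm ⊢
    obtain ⟨a, ha, w, hw, rfl⟩ := hm
    obtain ⟨b, hb, hab⟩ := hAB a ha
    obtain ⟨s, hs, hws⟩ := exists_mem_nsmul_abs_sub_le hAB n w hw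
    refine ⟨b + s, Set.add_mem_add hb hs, ?_⟩
    calc |a + w - (b + s)| = |(a - b) + (w - s)| := by ring_nf
      _ ≤ |a - b| + |w - s| := abs_add_le _ _
      _ ≤ ((n + 1 : ℕ) : ℤ) * μ := by push_cast; linarith

lemma exists_mem_nsmul_sdiff_Ioc {A X : Set ℤ} {h μ : ℕ} {y : ℤ} (hA : CoversAt A h)
    (hy : y ∈ A \ X) (hXy : ∀ x ∈ X, |x - y| ≤ μ) :
    ∃ N₀ : ℤ, ∀ z, N₀ ≤ z → ∃ s ∈ h • (A \ X), z < s ∧ s ≤ z + (2 * h * μ + 1 : ℕ) := by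
  obtain ⟨N, hN⟩ := coversAt_iff.1 hA
  have hnear : ∀ a ∈ A, ∃ b ∈ A \ X, |a - b| ≤ μ := fun a ha => by
    by_cases hx : a ∈ X
    · exact ⟨y, hy, hXy a hx⟩
    · exact ⟨a, ⟨ha, hx⟩, by simp⟩
  have hhμ : (0 : ℤ) ≤ h * μ := by positivity
  refine ⟨N, fun z hz => ?_⟩
  obtain ⟨s, hs, hms⟩ := exists_mem_nsmul_abs_sub_le hnear h _ (hN (z + 1 + h * μ) (by linarith))
  obtain ⟨hlo, hhi⟩ := abs_le.1 hms
  exact ⟨s, hs, by linarith, by push_cast; linarith⟩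

lemma coversAt_one_sdiff {A X : Set ℤ} (hA : CoversAt A 1) (hX : BddAbove X) :
    CoversAt (A \ X) 1 := by
  obtain ⟨N, hN⟩ := coversAt_iff.1 hA
  obtain ⟨M, hM⟩ := hX
  refine coversAt_iff.2 ⟨max N (M + 1), fun z hz => ?_⟩
  rw [one_nsmul] at hN ⊢
  exact ⟨hN z (le_of_max_le_left hz), fun hzX => by linarith [hM hzX, le_of_max_le_right hz]⟩

theorem stmt3_general (A : Set ℤ) (h : ℕ)
    (hA : IsAsympBasis A) (hord : basisOrder A ≤ h)
    (X : Set ℤ) (hXfin : X.Finite)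
    (hAX : IsAsympBasis (A \ X))
    (μ : ℤ) (hμ : IsLeast {m : ℤ | ∃ y ∈ A \ X, m = diam (X ∪ {y})} μ) :
    (basisOrder (A \ X) : ℤ) ≤ 4 * h * (2 * h * μ + 1) := by
  obtain ⟨⟨y, hy, rfl⟩, -⟩ := hμ
  have hXy_fin : (X ∪ {y}).Finite := hXfin.union (Set.finite_singleton y)
  have hXy : ∀ x ∈ X, |x - y| ≤ diam (X ∪ {y}) := fun x hx => abs_sub_le_iff.2
    ⟨sub_le_diam hXy_fin (.inl hx) (.inr rfl), sub_le_diam hXy_fin (.inr rfl) (.inl hx)⟩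
  have hdiam : 0 ≤ diam (X ∪ {y}) := by
    simpa using sub_le_diam hXy_fin (.inr rfl : y ∈ X ∪ {y}) (.inr rfl)
  lift diam (X ∪ {y}) to ℕ using hdiam with μ
  have hAh : CoversAt A h := hA.coversAt_basisOrder.mono hord
  rcases Nat.lt_or_ge h 2 with h1 | h2
  · interval_cases h
    · exact absurd hAh (not_coversAt_zero A)
    · have := basisOrder_le (coversAt_one_sdiff hAh hXfin.bddAbove)
      push_cast
      omega
  · obtain ⟨N₀, hgap⟩ := exists_mem_nsmul_sdiff_Ioc hAh hy hXy
    obtain ⟨t, ht, N, hN⟩ := exists_nsmul_covers_of_bounded_gaps hgap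
      fun d hd => hAX.eq_one_of_dvd_sub_nsmul h2 hd
    have hcov : CoversAt (A \ X) (h * t) := coversAt_iff.2 ⟨N, by simpa only [mul_nsmul] using hN⟩
    have hbound : h * t ≤ 4 * h * (2 * h * μ + 1) := by nlinarith
    exact_mod_cast (basisOrder_le hcov).trans hbound

theorem stmt3 (A : Set ℤ) (hfin : (A ∩ {x | x < 0}).Finite) (h : ℕ)
    (hA : IsAsympBasis A) (hord : basisOrder A ≤ h)
    (X : Set ℤ) (hXfin : X.Finite) (hXA : X ⊆ A)
    (hAX : IsAsympBasis (A \ X))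
    (μ : ℤ) (hμ : IsLeast {m : ℤ | ∃ y ∈ A \ X, m = diam (X ∪ {y})} μ) :
    (basisOrder (A \ X) : ℤ) ≤ 4 * h * (2 * h * μ + 1) :=
  stmt3_general A h hA hord X hXfin hAX μ hμ
end

section
/- Let d ≥ 1 and k ≥ 2 be integers, n = dk³, and A* = {x ∈ N : x mod n ∈ {1, dk²}}. Then A* is an asymptotic basis for N of order exactly n − 1 = dk³ − 1. -/
open Filter Set Pointwise

lemma mem_nfold_one {A : Set ℤ} {x : ℤ} (hx : x ∈ A) : x ∈ nfold A 1 :=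
  Set.mem_add.mpr ⟨x, hx, 0, rfl, add_zero x⟩

lemma add_mem_nfold {A : Set ℤ} : ∀ (a : ℕ) {b : ℕ} {u v : ℤ},
    u ∈ nfold A a → v ∈ nfold A b → u + v ∈ nfold A (a + b)
  | 0, b, u, v, hu, hv => by
      simp only [nfold, Set.mem_singleton_iff] at hu; subst hu
      simpa [Nat.zero_add] using hv
  | a+1, b, u, v, hu, hv => by
      obtain ⟨x, hx, y, hy, rfl⟩ := hu
      have h2 := add_mem_nfold a hy hv
      have h3 : x + (y + v) ∈ A + nfold A (a + b) := Set.add_mem_add hx h2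
      have he : (a + 1 + b) = (a + b) + 1 := by omega
      rw [he]
      show x + y + v ∈ A + nfold A (a+b)
      rwa [add_assoc]

lemma smul_mem_nfold {A : Set ℤ} {x : ℤ} (hx : x ∈ A) : ∀ (a : ℕ), (a : ℤ) * x ∈ nfold A a
  | 0 => by simp [nfold]
  | a+1 => by
      have h2 := smul_mem_nfold hx a
      have h3 : x + (a:ℤ)*x ∈ A + nfold A a := Set.add_mem_add hx h2
      show _ ∈ A + nfold A a
      push_cast
      convert h3 using 1
      ring

theorem stmt5 (d k n : ℕ) (hd : 1 ≤ d) (hk : 2 ≤ k) (hn : n = d * k ^ 3)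
    (Astar : Set ℤ)
    (hA : Astar = {x : ℤ | 0 ≤ x ∧
      (x % (n : ℤ) = 1 ∨ x % (n : ℤ) = (d : ℤ) * (k : ℤ) ^ 2)}) :
    IsAsympBasis Astar ∧ basisOrder Astar = n - 1 := by
  set q : ℕ := d * k ^ 2 with hq_def
  have hq1 : 1 ≤ q := Nat.one_le_iff_ne_zero.mpr (by positivity)
  have hqn : q < n := by
    rw [hn, hq_def]
    calc d * k ^ 2 < d * k ^ 2 * 2 := by omega
    _ ≤ d * k ^ 2 * k := by exact Nat.mul_le_mul_left _ hk
    _ = d * k ^ 3 := by ring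
  have hn2 : 2 ≤ n := by omega
  haveI : NeZero n := ⟨by omega⟩
  -- coprimality and the unit c
  have hcop : Nat.Coprime (q - 1) n := by
    have hc : Nat.Coprime (q - 1) q :=
      (Nat.coprime_self_sub_left hq1).mpr (Nat.coprime_one_left q)
    have hdvd : n ∣ q * k := by rw [hn, hq_def]; exact ⟨1, by ring⟩
    exact Nat.Coprime.coprime_dvd_right hdvd
      (hc.mul_right (hc.coprime_dvd_right ⟨d * k, by rw [hq_def]; ring⟩))
  set c : ZMod n := (q : ZMod n) - 1 with hc_def
  have hc_cast : ((q - 1 : ℕ) : ZMod n) = c := by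
    rw [hc_def, Nat.cast_sub hq1, Nat.cast_one]
  have hc_unit : IsUnit c := by
    rw [← hc_cast]
    exact (ZMod.isUnit_iff_coprime (q - 1) n).mpr hcop
  -- membership facts
  have hq_mem : ∀ t : ℕ, ((q : ℤ) + t * n) ∈ Astar := by
    intro t
    rw [hA]
    refine ⟨by positivity, Or.inr ?_⟩
    rw [Int.add_mul_emod_self_right]
    have : ((q : ℤ)) % n = q := Int.emod_eq_of_lt (by positivity) (by exact_mod_cast hqn)
    rw [this, hq_def]; push_cast; ring
  have h1_mem : ∀ t : ℕ, ((1 : ℤ) + t * n) ∈ Astar := by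
    intro t
    rw [hA]
    refine ⟨by positivity, Or.inl ?_⟩
    rw [Int.add_mul_emod_self_right]
    exact Int.emod_eq_of_lt (by norm_num) (by exact_mod_cast hn2)
  -- upper bound: CoversAt at n - 1
  have hcov : CoversAt Astar (n - 1) := by
    rw [CoversAt, eventually_atTop]
    refine ⟨(n - 1) * q, fun m hm => ?_⟩
    obtain ⟨u, hu⟩ := hc_unit
    set a : ℕ := (((m : ZMod n) - ((n - 1 : ℕ) : ZMod n)) * ↑u⁻¹).val with ha_def
    have ha_lt : a < n := ZMod.val_lt _
    have ha_eq : (a : ZMod n) * c = (m : ZMod n) - ((n - 1 : ℕ) : ZMod n) := by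
      rw [ha_def, ZMod.natCast_val, ZMod.cast_id, ← hu, Units.inv_mul_cancel_right]
    set b : ℕ := n - 1 - a with hb_def
    have hab : a + b = n - 1 := by omega
    set s : ℕ := a * q + b with hs_def
    have hs_cast : (s : ZMod n) = (m : ZMod n) := by
      have habz : ((a : ZMod n) + (b : ZMod n)) = ((n - 1 : ℕ) : ZMod n) := by
        rw [← Nat.cast_add, hab]
      rw [hs_def]
      push_cast
      rw [hc_def] at ha_eq
      linear_combination ha_eq + habz
    have hsm : s ≤ m := by
      calc s = a * q + b := hs_def
        _ ≤ a * q + b * q := by nlinarith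
        _ = (a + b) * q := by ring
        _ = (n - 1) * q := by rw [hab]
        _ ≤ m := hm
    have hdvd : n ∣ m - s := by
      have : s ≡ m [MOD n] := (ZMod.natCast_eq_natCast_iff _ _ _).mp hs_cast
      exact (Nat.modEq_iff_dvd' hsm).mp this
    obtain ⟨t, ht⟩ := hdvd
    have hmst : m = s + n * t := by omega
    have hmz : (m : ℤ) = (a : ℤ) * q + b + n * t := by
      have := congrArg (Nat.cast : ℕ → ℤ) hmst
      push_cast at this
      rw [this, hs_def]; push_cast; ring
    have h1A : (1 : ℤ) ∈ Astar := by simpa using h1_mem 0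
    have hqA : (q : ℤ) ∈ Astar := by simpa using hq_mem 0
    rcases Nat.eq_zero_or_pos a with hA0 | hApos
    · -- a = 0 : use 1 + t*n as the absorbing element, plus (b-1) ones
      have hb1 : 1 ≤ b := by omega
      have he1 : ((1 : ℤ) + t * n) ∈ nfold Astar 1 := mem_nfold_one (h1_mem t)
      have he2 : ((b - 1 : ℕ) : ℤ) * 1 ∈ nfold Astar (b - 1) := smul_mem_nfold h1A _
      have hsum := add_mem_nfold 1 he1 he2
      have hcount : 1 + (b - 1) = n - 1 := by omega
      rw [hcount] at hsum
      have hval : (m : ℤ) = (1 + ↑t * ↑n) + ((b - 1 : ℕ) : ℤ) * 1 := by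
        rw [hmz]
        have : ((b - 1 : ℕ) : ℤ) = (b : ℤ) - 1 := by
          rw [Nat.cast_sub hb1, Nat.cast_one]
        rw [this, hA0]
        push_cast
        ring
      rwa [hval]
    · -- a ≥ 1 : use q + t*n as the absorbing element
      have he1 : ((q : ℤ) + t * n) ∈ nfold Astar 1 := mem_nfold_one (hq_mem t)
      have he2 : ((a - 1 : ℕ) : ℤ) * q ∈ nfold Astar (a - 1) := smul_mem_nfold hqA _
      have he3 : ((b : ℕ) : ℤ) * 1 ∈ nfold Astar b := smul_mem_nfold h1A _
      have hsum := add_mem_nfold 1 he1 (add_mem_nfold (a - 1) he2 he3)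
      have hcount : 1 + (a - 1 + b) = n - 1 := by omega
      rw [hcount] at hsum
      have hval : (m : ℤ) = (↑q + ↑t * ↑n) + (((a - 1 : ℕ) : ℤ) * q + ((b : ℕ) : ℤ) * 1) := by
        rw [hmz]
        have : ((a - 1 : ℕ) : ℤ) = (a : ℤ) - 1 := by
          rw [Nat.cast_sub hApos, Nat.cast_one]
        rw [this]
        ring
      rwa [hval]
  -- lower bound: any covering order is at least n - 1
  have hlow : ∀ h : ℕ, CoversAt Astar h → n - 1 ≤ h := by
    intro h hcovh
    by_contra hlt
    push_neg at hlt
    -- residues of elements of nfold Astar h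
    have hres : ∀ (h' : ℕ) (x : ℤ), x ∈ nfold Astar h' →
        ∃ a : ℕ, a ≤ h' ∧ (x : ZMod n) = (h' : ZMod n) + (a : ZMod n) * c := by
      intro h'
      induction h' with
      | zero =>
        intro x hx
        simp only [nfold, Set.mem_singleton_iff] at hx
        subst hx
        exact ⟨0, le_refl 0, by simp⟩
      | succ h' ih =>
        rintro x ⟨y, hy, z, hz, rfl⟩
        obtain ⟨a, ha, hza⟩ := ih z hz
        rw [hA] at hy
        obtain ⟨hy0, hy1 | hy2⟩ := hy
        · refine ⟨a, by omega, ?_⟩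
          have hy' : (y : ZMod n) = 1 := by
            rw [← ZMod.intCast_mod y n, hy1, Int.cast_one]
          push_cast
          rw [hy', hza]
          push_cast
          ring
        · refine ⟨a + 1, by omega, ?_⟩
          have hy' : (y : ZMod n) = (q : ZMod n) := by
            have hq' : ((d : ℤ) * (k : ℤ) ^ 2 : ℤ) = ((q : ℕ) : ℤ) := by
              rw [hq_def]; push_cast; ring
            rw [← ZMod.intCast_mod y n, hy2, hq']
            push_cast
            ring
          push_cast
          rw [hy', hza, hc_def]
          push_cast
          ring
    -- the set of possible residues is too small
    set T : Finset (ZMod n) :=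
      (Finset.range (h + 1)).image (fun a : ℕ => (h : ZMod n) + (a : ZMod n) * c) with hT_def
    have hTcard : T.card < n := by
      calc T.card ≤ (Finset.range (h + 1)).card := Finset.card_image_le
        _ = h + 1 := Finset.card_range _
        _ < n := by omega
    have hmiss : ∃ r : ZMod n, r ∉ T := by
      by_contra hall
      push_neg at hall
      have : (Finset.univ : Finset (ZMod n)) ⊆ T := fun r _ => hall r
      have := Finset.card_le_card this
      rw [Finset.card_univ, ZMod.card n] at this
      omega
    obtain ⟨r, hr⟩ := hmiss
    obtain ⟨N, hN⟩ := eventually_atTop.mp hcovh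
    set m : ℕ := r.val + N * n with hm_def
    have hmN : N ≤ m := by
      have : N * 1 ≤ N * n := Nat.mul_le_mul_left N (by omega)
      omega
    have hm_mem := hN m hmN
    obtain ⟨a, ha, hma⟩ := hres h (m : ℤ) hm_mem
    have hm_cast : (((m : ℕ) : ℤ) : ZMod n) = r := by
      rw [hm_def]
      push_cast
      rw [ZMod.natCast_val, ZMod.cast_id, ZMod.natCast_self]
      ring
    apply hr
    rw [hT_def]
    exact Finset.mem_image.mpr ⟨a, Finset.mem_range.mpr (by omega), by rw [← hma, hm_cast]⟩
  refine ⟨⟨n - 1, hcov⟩, ?_⟩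
  apply le_antisymm
  · exact Nat.sInf_le hcov
  · exact le_csInf ⟨n - 1, hcov⟩ fun b hb => hlow b hb
end

section
/- Let h, μ ≥ 2 be integers, n = h(h−1)μ + 1, Y = {0, 1, μ, hμ}. Then every integer m with 0 ≤ m ≤ n − 1 is a sum of at most 2h + μ − 4 elements of Y. -/
open Filter Set Pointwise

lemma nfold_add_mem (Y : Set ℤ) : ∀ (s : ℕ) {x y : ℤ} (t : ℕ),
    x ∈ nfold Y s → y ∈ nfold Y t → x + y ∈ nfold Y (s + t) := by
  intro s
  induction s with
  | zero => intro x y t hx hy; simp [nfold] at hx; simpa [hx]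
  | succ n ih =>
    intro x y t hx hy
    obtain ⟨u, hu, v, hv, rfl⟩ := hx
    have h1 := ih t hv hy
    have e : n + 1 + t = (n + t) + 1 := by omega
    rw [e]
    have : u + (v + y) ∈ nfold Y ((n+t)+1) := ⟨u, hu, v + y, h1, rfl⟩
    simpa [add_assoc] using this

lemma nfold_smul_mem (Y : Set ℤ) {y : ℤ} (hy : y ∈ Y) (k : ℕ) :
    (k : ℤ) * y ∈ nfold Y k := by
  induction k with
  | zero => simp [nfold]
  | succ n ih =>
    have : y + (n : ℤ) * y ∈ nfold Y (n+1) := ⟨y, hy, (n : ℤ) * y, ih, rfl⟩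
    convert this using 1
    push_cast; ring

lemma nfold_zero_mem (Y : Set ℤ) (h0 : (0:ℤ) ∈ Y) (k : ℕ) : (0:ℤ) ∈ nfold Y k := by
  simpa using nfold_smul_mem Y h0 k

lemma nfold_pad (Y : Set ℤ) (h0 : (0:ℤ) ∈ Y) {x : ℤ} {s t : ℕ} (hst : s ≤ t)
    (hx : x ∈ nfold Y s) : x ∈ nfold Y t := by
  obtain ⟨k, rfl⟩ := Nat.exists_eq_add_of_le hst
  simpa using nfold_add_mem Y s k hx (nfold_zero_mem Y h0 k)

theorem stmt11 (h μ : ℕ) (hh : 2 ≤ h) (hμ : 2 ≤ μ)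
    (Y : Set ℤ) (hY : Y = {0, 1, (μ : ℤ), (h : ℤ) * (μ : ℤ)})
    (m : ℤ) (hm0 : 0 ≤ m) (hm1 : m ≤ ((h : ℤ) * ((h : ℤ) - 1) * (μ : ℤ) + 1) - 1) :
    m ∈ nfold Y (2 * h + μ - 4) := by
  have h0 : (0:ℤ) ∈ Y := by simp [hY]
  have hone : (1:ℤ) ∈ Y := by simp [hY]
  have hmuY : (μ:ℤ) ∈ Y := by simp [hY]
  have hhmuY : (h:ℤ) * (μ:ℤ) ∈ Y := by simp [hY]
  lift m to ℕ using hm0 with M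
  have hcast : ((h*(h-1)*μ : ℕ) : ℤ) = (h:ℤ)*((h:ℤ)-1)*(μ:ℤ) := by
    push_cast [Nat.cast_sub (by omega : 1 ≤ h)]; ring
  have hM : M ≤ h*(h-1)*μ := by
    have : (M:ℤ) ≤ ((h*(h-1)*μ : ℕ) : ℤ) := by rw [hcast]; linarith
    exact_mod_cast this
  have hμpos : 0 < μ := by omega
  have hhμpos : 0 < h*μ := by positivity
  rcases eq_or_lt_of_le hM with heq | hlt
  · -- M = h*(h-1)*μ = (h-1)*(h*μ)
    have key : ((h-1 : ℕ):ℤ) * ((h:ℤ)*(μ:ℤ)) ∈ nfold Y (h-1) :=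
      nfold_smul_mem Y hhmuY (h-1)
    have hle : h - 1 ≤ 2*h + μ - 4 := by omega
    have : (M:ℤ) = ((h-1:ℕ):ℤ) * ((h:ℤ)*(μ:ℤ)) := by
      rw [heq]; push_cast [Nat.cast_sub (by omega : 1 ≤ h)]; ring
    rw [this]
    exact nfold_pad Y h0 hle key
  · set a := M / (h*μ) with ha
    set r := M % (h*μ) with hr
    set b := r / μ with hb
    set c := r % μ with hc
    have hMeq : M = a*(h*μ) + (b*μ + c) := by
      simp only [ha, hb, hc, hr]
      rw [Nat.div_add_mod', Nat.div_add_mod']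
    have hcμ : c < μ := Nat.mod_lt _ hμpos
    have hrlt : r < h*μ := Nat.mod_lt _ hhμpos
    have hbh : b < h := by
      rw [hb, Nat.div_lt_iff_lt_mul hμpos]; exact hrlt
    have hah : a < h - 1 := by
      rw [ha, Nat.div_lt_iff_lt_mul hhμpos]
      calc M < h*(h-1)*μ := hlt
        _ = (h-1)*(h*μ) := by ring
    have hsum : a + b + c ≤ 2*h + μ - 4 := by omega
    have m1 : ((a:ℕ):ℤ) * ((h:ℤ)*(μ:ℤ)) ∈ nfold Y a := nfold_smul_mem Y hhmuY a
    have m2 : ((b:ℕ):ℤ) * (μ:ℤ) ∈ nfold Y b := nfold_smul_mem Y hmuY b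
    have m3 : ((c:ℕ):ℤ) * 1 ∈ nfold Y c := nfold_smul_mem Y hone c
    have msum := nfold_add_mem Y a (b+c) m1 (nfold_add_mem Y b c m2 m3)
    have : (M:ℤ) = (a:ℤ) * ((h:ℤ)*(μ:ℤ)) + ((b:ℤ)*(μ:ℤ) + (c:ℤ)*1) := by
      rw [hMeq]; push_cast; ring
    rw [this]
    exact nfold_pad Y h0 (by omega : a + (b+c) ≤ 2*h+μ-4) msum
end

section
/- Let g ∈ Z/nZ with gcd(g − 1, n) = 1 where g is represented by an integer not congruent to 1 mod n. Then {1, g} is a basis of Z/nZ of order exactly n − 1. -/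
open Filter Set Pointwise

lemma mem_nfoldZ' {n : ℕ} (g : ZMod n) (t j : ℕ) (hj : j ≤ t) :
    ((t : ZMod n) + (j : ZMod n) * (g - 1)) ∈ nfoldZ ({1, g} : Set (ZMod n)) t := by
  induction t generalizing j with
  | zero => interval_cases j; simp [nfoldZ]
  | succ t ih =>
    show _ ∈ ({1, g} : Set (ZMod n)) + nfoldZ _ t
    rcases Nat.lt_or_ge j (t+1) with h | h
    · have hm := ih j (Nat.lt_succ_iff.mp h)
      have : ((t+1 : ℕ) : ZMod n) + (j : ZMod n) * (g - 1)
          = 1 + ((t : ZMod n) + (j : ZMod n) * (g - 1)) := by push_cast; ring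
      rw [this]
      exact Set.add_mem_add (by simp) hm
    · have hj' : j = t + 1 := le_antisymm hj h
      subst hj'
      have hm := ih t le_rfl
      have : ((t+1 : ℕ) : ZMod n) + ((t+1 : ℕ) : ZMod n) * (g - 1)
          = g + ((t : ZMod n) + (t : ZMod n) * (g - 1)) := by push_cast; ring
      rw [this]
      exact Set.add_mem_add (by simp) hm

lemma nfoldZ_subset' {n : ℕ} (g : ZMod n) (t : ℕ) :
    nfoldZ ({1, g} : Set (ZMod n)) t ⊆
      (fun j : ℕ => (t : ZMod n) + (j : ZMod n) * (g - 1)) '' Set.Iic t := by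
  induction t with
  | zero =>
    rintro x hx
    simp only [nfoldZ, Set.mem_singleton_iff] at hx
    exact ⟨0, by simp, by simp [hx]⟩
  | succ t ih =>
    rintro x hx
    obtain ⟨a, ha, y, hy, rfl⟩ := Set.mem_add.mp hx
    obtain ⟨j, hj, rfl⟩ := ih hy
    simp only [Set.mem_Iic] at hj
    rcases ha with rfl | rfl
    · exact ⟨j, Set.mem_Iic.mpr (le_trans hj (Nat.le_succ t)), by push_cast; ring⟩
    · exact ⟨j+1, Set.mem_Iic.mpr (Nat.succ_le_succ hj), by push_cast; ring⟩

theorem stmt16 (n : ℕ) (hn : 1 < n) (g : ZMod n) (hg : g ≠ 1)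
    (hcop : Nat.gcd (g - 1).val n = 1) :
    nfoldZ ({1, g} : Set (ZMod n)) (n - 1) = Set.univ ∧
      ∀ t < n - 1, nfoldZ ({1, g} : Set (ZMod n)) t ≠ Set.univ := by
  haveI : NeZero n := ⟨by omega⟩
  have hu : IsUnit (g - 1) := by
    have := (ZMod.isUnit_iff_coprime (g - 1).val n).mpr hcop
    simpa [ZMod.natCast_val, ZMod.cast_id] using this
  constructor
  · ext x
    simp only [Set.mem_univ, iff_true]
    set u := hu.unit
    set j : ZMod n := (↑u⁻¹ : ZMod n) * (x - ((n - 1 : ℕ) : ZMod n)) with hjdef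
    have hjv : j.val ≤ n - 1 := by
      have := ZMod.val_lt j
      omega
    have key : ((n - 1 : ℕ) : ZMod n) + (j.val : ZMod n) * (g - 1) = x := by
      rw [ZMod.natCast_val, ZMod.cast_id, hjdef]
      have hug : (↑u : ZMod n) = g - 1 := rfl
      have : (↑u⁻¹ : ZMod n) * (x - ((n - 1 : ℕ) : ZMod n)) * (g - 1)
          = (x - ((n - 1 : ℕ) : ZMod n)) * ((↑u⁻¹ : ZMod n) * ↑u) := by
        rw [hug]; ring
      rw [this, u.inv_mul]
      ring
    rw [← key]
    exact mem_nfoldZ' g (n - 1) j.val hjv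
  · intro t ht hcontra
    have hcard : (Set.univ : Set (ZMod n)).ncard ≤ ((fun j : ℕ => (t : ZMod n) + (j : ZMod n) * (g - 1)) '' Set.Iic t).ncard := by
      rw [← hcontra] at *
      exact Set.ncard_le_ncard (nfoldZ_subset' g t) ((Set.finite_Iic t).image _)
    have h1 : (Set.univ : Set (ZMod n)).ncard = n := by
      simp [Set.ncard_univ, Nat.card_eq_fintype_card, ZMod.card]
    have h2 : ((fun j : ℕ => (t : ZMod n) + (j : ZMod n) * (g - 1)) '' Set.Iic t).ncard ≤ t + 1 := by
      refine le_trans (Set.ncard_image_le (Set.finite_Iic t)) ?_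
      rw [← Finset.coe_Iic, Set.ncard_coe_finset, Nat.card_Iic]
    omega
end
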